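/- arXiv:1212.6106 — 2 statements merged into one kernel-verified Lean document; each statement's English description precedes it below -/
import Mathlib

section
/- (Tropical binomial identity for traces) For any n×n matrices A and B over an idempotent commutative semifield and any integer m ≥ 1, tr((A ⊕ B)^m) = tr(B^m) ⊕ ⨁_{k=1}^{m} ⨁_{i₁+⋯+i_k = m−k, i_j ≥ 0} tr(A B^{i₁} ⋯ A B^{i_k}). -/
/-!
Write `C = A ⊕ B`. Splitting each product at its first factor `A` gives
`C^(r+1) = B^(r+1) ⊕ ⨁_{i+j=r} B^i A C^j`. Under the trace, `B^i A C^j` rotates to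
`A C^j B^i ≤ A C^r` (as `B ≤ C`), so `tr C^(r+1) = tr B^(r+1) ⊕ tr (A C^r)`. Applying the same
splitting to `A C^r` recursively shows that `A C^r` is the supremum of all the products
`A B^{i₁} ⋯ A B^{i_k}` of total length `r + 1`.
-/

noncomputable section

variable {K : Type*} [LinearOrderedCommGroupWithZero K]

/-- In a linearly ordered idempotent semifield the zero is the bottom element. -/
instance : OrderBot K where
  bot := 0
  bot_le _ := zero_le'

/-- Tropical matrix product over the idempotent semifield: `{AB}_{ij} = ⊕_k a_{ik} b_{kj}`. -/
def tmul {n : ℕ} (A B : Fin n → Fin n → K) : Fin n → Fin n → K :=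
  fun i j => Finset.univ.sup fun k => A i k * B k j

/-- Entrywise tropical sum of matrices. -/
def tadd {n : ℕ} (A B : Fin n → Fin n → K) : Fin n → Fin n → K :=
  fun i j => A i j ⊔ B i j

/-- The tropical identity matrix. -/
def idMat (n : ℕ) : Fin n → Fin n → K :=
  fun i j => if i = j then 1 else 0

/-- Tropical matrix power. -/
def tpow {n : ℕ} (A : Fin n → Fin n → K) : ℕ → (Fin n → Fin n → K)
  | 0 => idMat n
  | m + 1 => tmul A (tpow A m)

/-- Tropical trace: `tr A = a₁₁ ⊕ ⋯ ⊕ aₙₙ`. -/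
def ttr {n : ℕ} (A : Fin n → Fin n → K) : K :=
  Finset.univ.sup fun i => A i i

/-- The product `A B^{i₁} ⋯ A B^{i_k}` for a tuple of exponents `t : Fin k → ℕ`. -/
def prodTup {n k : ℕ} (A B : Fin n → Fin n → K) (t : Fin k → ℕ) : Fin n → Fin n → K :=
  (List.ofFn fun j => tmul A (tpow B (t j))).foldr tmul (idMat n)

lemma mul_finset_sup₀ {ι : Type*} (a : K) (s : Finset ι) (f : ι → K) :
    a * s.sup f = s.sup fun i => a * f i :=
  Finset.apply_sup_eq_sup_comp (a * ·) (fun _ _ => mul_sup₀ zero_le _ _) (mul_zero a)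

lemma finset_sup_mul₀ {ι : Type*} (a : K) (s : Finset ι) (f : ι → K) :
    s.sup f * a = s.sup fun i => f i * a :=
  Finset.apply_sup_eq_sup_comp (· * a) (fun _ _ => sup_mul₀ zero_le _ _) (zero_mul a)

section TropicalMatrix

variable {n : ℕ}

lemma tadd_eq_sup (A B : Fin n → Fin n → K) : tadd A B = A ⊔ B := rfl

lemma tpow_zero (A : Fin n → Fin n → K) : tpow A 0 = idMat n := rfl

lemma tpow_succ (A : Fin n → Fin n → K) (m : ℕ) : tpow A (m + 1) = tmul A (tpow A m) := rfl

lemma tmul_sup (X Y Z : Fin n → Fin n → K) : tmul X (Y ⊔ Z) = tmul X Y ⊔ tmul X Z := by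
  funext i j
  simp only [tmul, Pi.sup_apply, mul_sup₀ zero_le]
  exact Finset.sup_sup

lemma sup_tmul (X Y Z : Fin n → Fin n → K) : tmul (X ⊔ Y) Z = tmul X Z ⊔ tmul Y Z := by
  funext i j
  simp only [tmul, Pi.sup_apply, sup_mul₀ zero_le]
  exact Finset.sup_sup

lemma tmul_bot (X : Fin n → Fin n → K) : tmul X ⊥ = ⊥ := by
  funext i j
  simp only [tmul, Pi.bot_apply]
  exact Finset.sup_eq_bot_iff _ _ |>.mpr fun k _ => mul_zero (X i k)

lemma tmul_finset_sup {ι : Type*} (X : Fin n → Fin n → K) (s : Finset ι)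
    (F : ι → Fin n → Fin n → K) : tmul X (s.sup F) = s.sup fun a => tmul X (F a) :=
  Finset.apply_sup_eq_sup_comp (tmul X) (tmul_sup X) (tmul_bot X)

lemma tmul_assoc (X Y Z : Fin n → Fin n → K) : tmul (tmul X Y) Z = tmul X (tmul Y Z) := by
  funext i j
  simp only [tmul, finset_sup_mul₀, mul_finset_sup₀, mul_assoc]
  exact Finset.sup_comm _ _ _

lemma idMat_tmul (X : Fin n → Fin n → K) : tmul (idMat n) X = X := by
  funext i j
  refine le_antisymm (Finset.sup_le fun k _ => ?_)
    (le_of_eq_of_le ?_ (Finset.le_sup (Finset.mem_univ i)))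
  · by_cases h : i = k <;> simp [idMat, h]
  · simp [idMat]

lemma tmul_idMat (X : Fin n → Fin n → K) : tmul X (idMat n) = X := by
  funext i j
  refine le_antisymm (Finset.sup_le fun k _ => ?_)
    (le_of_eq_of_le ?_ (Finset.le_sup (Finset.mem_univ j)))
  · by_cases h : k = j <;> simp [idMat, h]
  · simp [idMat]

lemma tmul_le_tmul {X X' Y Y' : Fin n → Fin n → K} (hX : X ≤ X') (hY : Y ≤ Y') :
    tmul X Y ≤ tmul X' Y' := fun i j =>
  Finset.sup_mono_fun fun k _ => mul_le_mul' (hX i k) (hY k j)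

lemma tpow_mono {X Y : Fin n → Fin n → K} (h : X ≤ Y) (m : ℕ) : tpow X m ≤ tpow Y m := by
  induction m with
  | zero => exact le_rfl
  | succ m ih => exact tmul_le_tmul h ih

lemma tpow_add (X : Fin n → Fin n → K) (a b : ℕ) :
    tpow X (a + b) = tmul (tpow X a) (tpow X b) := by
  induction a with
  | zero => rw [zero_add, tpow_zero, idMat_tmul]
  | succ a ih => rw [Nat.add_right_comm, tpow_succ, ih, tpow_succ, tmul_assoc]

lemma ttr_mono {X Y : Fin n → Fin n → K} (h : X ≤ Y) : ttr X ≤ ttr Y :=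
  Finset.sup_mono_fun fun i _ => h i i

lemma ttr_sup (X Y : Fin n → Fin n → K) : ttr (X ⊔ Y) = ttr X ⊔ ttr Y :=
  Finset.sup_sup

lemma ttr_bot : ttr (⊥ : Fin n → Fin n → K) = ⊥ :=
  Finset.sup_bot _

lemma ttr_finset_sup {ι : Type*} (s : Finset ι) (F : ι → Fin n → Fin n → K) :
    ttr (s.sup F) = s.sup fun a => ttr (F a) :=
  Finset.apply_sup_eq_sup_comp ttr ttr_sup ttr_bot

lemma ttr_tmul_comm (X Y : Fin n → Fin n → K) : ttr (tmul X Y) = ttr (tmul Y X) := by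
  simp only [ttr, tmul, mul_comm (X _ _)]
  exact Finset.sup_comm _ _ _

end TropicalMatrix

section Binomial

open Finset

variable {n : ℕ} (A B : Fin n → Fin n → K)

lemma tpow_sup_succ (r : ℕ) :
    tpow (A ⊔ B) (r + 1) = tpow B (r + 1) ⊔
      (antidiagonal r).sup fun p => tmul (tpow B p.1) (tmul A (tpow (A ⊔ B) p.2)) := by
  induction r with
  | zero =>
    simp only [zero_add, tpow_succ, tpow_zero, tmul_idMat, Nat.antidiagonal_zero, sup_singleton,
      idMat_tmul]
    exact sup_comm _ _
  | succ r ih =>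
    have hB : tmul B (tpow (A ⊔ B) (r + 1)) = tpow B (r + 2) ⊔
        (antidiagonal r).sup fun p => tmul (tpow B (p.1 + 1)) (tmul A (tpow (A ⊔ B) p.2)) := by
      simp only [ih, tmul_sup, tmul_finset_sup, ← tmul_assoc, ← tpow_succ]
    rw [tpow_succ, sup_tmul, hB, Nat.antidiagonal_succ, sup_cons, sup_map, tpow_zero, idMat_tmul,
      sup_left_comm]
    rfl

lemma ttr_tpow_sup_succ (r : ℕ) :
    ttr (tpow (A ⊔ B) (r + 1)) = ttr (tpow B (r + 1)) ⊔ ttr (tmul A (tpow (A ⊔ B) r)) := by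
  refine le_antisymm ?_ (sup_le (ttr_mono (tpow_mono le_sup_right _))
    (ttr_mono (tmul_le_tmul le_sup_left le_rfl)))
  rw [tpow_sup_succ, ttr_sup, ttr_finset_sup]
  refine sup_le_sup_left (Finset.sup_le fun p hp => ?_) _
  rw [HasAntidiagonal.mem_antidiagonal] at hp
  calc ttr (tmul (tpow B p.1) (tmul A (tpow (A ⊔ B) p.2)))
      = ttr (tmul A (tmul (tpow (A ⊔ B) p.2) (tpow B p.1))) := by
        rw [ttr_tmul_comm, tmul_assoc]
    _ ≤ ttr (tmul A (tmul (tpow (A ⊔ B) p.2) (tpow (A ⊔ B) p.1))) :=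
        ttr_mono (tmul_le_tmul le_rfl (tmul_le_tmul le_rfl (tpow_mono le_sup_right _)))
    _ = ttr (tmul A (tpow (A ⊔ B) r)) := by rw [← tpow_add, ← hp, add_comm]

end Binomial

section Words

variable {n : ℕ} (A B : Fin n → Fin n → K)

def prodTupSup (m : ℕ) : Fin n → Fin n → K :=
  (Finset.Icc 1 m).sup fun k => (Finset.Nat.antidiagonalTuple k (m - k)).sup (prodTup A B)

lemma prodTup_elim0 (t : Fin 0 → ℕ) : prodTup A B t = idMat n := rfl

lemma prodTup_cons {k : ℕ} (i : ℕ) (t : Fin k → ℕ) :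
    prodTup A B (Fin.cons i t) = tmul (tmul A (tpow B i)) (prodTup A B t) := by
  simp only [prodTup, List.ofFn_succ, Fin.cons_zero, Fin.cons_succ, List.foldr_cons]

lemma prodTup_le_tpow {k : ℕ} (t : Fin k → ℕ) :
    prodTup A B t ≤ tpow (A ⊔ B) (∑ j, t j + k) := by
  induction t using Fin.consInduction with
  | elim0 => exact le_rfl
  | @cons k i t ih =>
    rw [prodTup_cons, Fin.sum_cons,
      show i + ∑ j, t j + (k + 1) = (i + 1) + (∑ j, t j + k) by omega, tpow_add, tpow_succ]
    exact tmul_le_tmul (tmul_le_tmul le_sup_left (tpow_mono le_sup_right i)) ih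

lemma prodTup_le_prodTupSup {k : ℕ} (hk : 1 ≤ k) (t : Fin k → ℕ) :
    prodTup A B t ≤ prodTupSup A B (∑ j, t j + k) :=
  (Finset.le_sup (Finset.Nat.mem_antidiagonalTuple.mpr (by omega))).trans
    (Finset.le_sup (f := fun k' => (Finset.Nat.antidiagonalTuple k' (∑ j, t j + k - k')).sup
      (prodTup A B)) (Finset.mem_Icc.mpr ⟨hk, by omega⟩))

lemma prodTupSup_le_tmul_tpow (r : ℕ) : prodTupSup A B (r + 1) ≤ tmul A (tpow (A ⊔ B) r) := by
  refine Finset.sup_le fun k hk => Finset.sup_le fun t ht => ?_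
  obtain ⟨k, rfl⟩ : ∃ k', k = k' + 1 := ⟨k - 1, by grind⟩
  induction t using Fin.consCases with
  | cons i t =>
    rw [Finset.Nat.mem_antidiagonalTuple, Fin.sum_cons] at ht
    rw [prodTup_cons, tmul_assoc, show r = i + (∑ j, t j + k) by grind, tpow_add]
    exact tmul_le_tmul le_rfl (tmul_le_tmul (tpow_mono le_sup_right i) (prodTup_le_tpow A B t))

lemma tmul_tpow_le_prodTupSup (r : ℕ) : tmul A (tpow B r) ≤ prodTupSup A B (r + 1) := by
  simpa [prodTup_cons, prodTup_elim0, tmul_idMat] using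
    prodTup_le_prodTupSup A B le_rfl (Fin.cons r Fin.elim0)

lemma tmul_tmul_tpow_prodTupSup_le (i m : ℕ) :
    tmul (tmul A (tpow B i)) (prodTupSup A B m) ≤ prodTupSup A B (i + 1 + m) := by
  simp only [prodTupSup, tmul_finset_sup]
  refine Finset.sup_le fun k hk => Finset.sup_le fun t ht => ?_
  rw [Finset.mem_Icc] at hk
  rw [Finset.Nat.mem_antidiagonalTuple] at ht
  rw [← prodTup_cons]
  refine (prodTup_le_prodTupSup A B (Nat.le_add_left 1 k) (Fin.cons i t)).trans_eq ?_
  rw [Fin.sum_cons]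
  congr 1
  omega

lemma tmul_tpow_sup_le_prodTupSup (r : ℕ) :
    tmul A (tpow (A ⊔ B) r) ≤ prodTupSup A B (r + 1) := by
  induction r using Nat.strong_induction_on with
  | _ r ih =>
    cases r with
    | zero => simpa only [tpow_zero] using tmul_tpow_le_prodTupSup A B 0
    | succ r =>
      rw [tpow_sup_succ, tmul_sup, tmul_finset_sup]
      refine sup_le (tmul_tpow_le_prodTupSup A B _) (Finset.sup_le fun p hp => ?_)
      rw [Finset.HasAntidiagonal.mem_antidiagonal] at hp
      calc tmul A (tmul (tpow B p.1) (tmul A (tpow (A ⊔ B) p.2)))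
          ≤ tmul (tmul A (tpow B p.1)) (prodTupSup A B (p.2 + 1)) := by
            rw [← tmul_assoc]
            exact tmul_le_tmul le_rfl (ih p.2 (by omega))
        _ ≤ prodTupSup A B (r + 1 + 1) := by
            refine (tmul_tmul_tpow_prodTupSup_le A B p.1 (p.2 + 1)).trans_eq ?_
            congr 1
            omega

lemma tmul_tpow_sup_eq_prodTupSup (r : ℕ) : tmul A (tpow (A ⊔ B) r) = prodTupSup A B (r + 1) :=
  le_antisymm (tmul_tpow_sup_le_prodTupSup A B r) (prodTupSup_le_tmul_tpow A B r)

end Words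

/-- Tropical binomial identity for traces:
`tr (A ⊕ B)^m = tr B^m ⊕ ⨁_{k=1}^m ⨁_{i₁+⋯+i_k = m−k} tr(A B^{i₁} ⋯ A B^{i_k})`. -/
theorem trace_binomial_identity {n : ℕ} (A B : Fin n → Fin n → K) (m : ℕ) (hm : 1 ≤ m) :
    ttr (tpow (tadd A B) m) =
      ttr (tpow B m) ⊔
        (Finset.Icc 1 m).sup fun k =>
          (Finset.Nat.antidiagonalTuple k (m - k)).sup fun t => ttr (prodTup A B t) := by
  obtain ⟨r, rfl⟩ : ∃ r, m = r + 1 := ⟨m - 1, by omega⟩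
  rw [tadd_eq_sup, ttr_tpow_sup_succ, tmul_tpow_sup_eq_prodTupSup, prodTupSup, ttr_finset_sup]
  simp only [ttr_finset_sup]
end
end

section
/- For a square matrix A over an idempotent semifield and a regular vector x, the equality x⁻ A x = θ, where θ is the minimum value of x⁻ A x over regular x, holds if and only if θ⁻¹ A x ≤ x. -/
noncomputable section

variable {K : Type*} [LinearOrderedCommGroupWithZero K]

/-- Tropical matrix-vector product. -/
def matVec {n : ℕ} (A : Fin n → Fin n → K) (x : Fin n → K) : Fin n → K :=
  fun i => Finset.univ.sup fun k => A i k * x k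

/-- The tropical quadratic form `x⁻ A x = ⊕_{i,j} x_i⁻¹ a_{ij} x_j`. -/
def quadForm {n : ℕ} (A : Fin n → Fin n → K) (x : Fin n → K) : K :=
  Finset.univ.sup fun p : Fin n × Fin n => (x p.1)⁻¹ * A p.1 p.2 * x p.2

/-- If `θ > 0` is the minimum of `x⁻ A x` over regular vectors `x`, then a regular
vector `x` satisfies `x⁻ A x = θ` if and only if `θ⁻¹ A x ≤ x`. -/
theorem attains_min_iff_inequality {n : ℕ} (A : Fin n → Fin n → K) (θ : K) (hθ : θ ≠ 0)
    (hmin : IsLeast {t : K | ∃ x : Fin n → K, (∀ i, x i ≠ 0) ∧ quadForm A x = t} θ) :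
    ∀ x : Fin n → K, (∀ i, x i ≠ 0) →
      (quadForm A x = θ ↔ ∀ i, matVec (fun i j => θ⁻¹ * A i j) x i ≤ x i) := by
  intro x hx
  have key : ∀ i j : Fin n, (θ⁻¹ * A i j * x j ≤ x i ↔ (x i)⁻¹ * A i j * x j ≤ θ) := by
    intro i j
    rw [mul_assoc, inv_mul_le_iff₀ (zero_lt_iff.mpr hθ), mul_assoc,
      inv_mul_le_iff₀ (zero_lt_iff.mpr (hx i)), mul_comm θ (x i)]
  constructor
  · intro hq i
    apply Finset.sup_le
    intro j _
    rw [key i j, ← hq]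
    exact Finset.le_sup (f := fun p : Fin n × Fin n => (x p.1)⁻¹ * A p.1 p.2 * x p.2)
      (Finset.mem_univ (i, j))
  · intro h
    apply le_antisymm
    · apply Finset.sup_le
      intro p _
      rw [← key p.1 p.2]
      exact le_trans (Finset.le_sup (f := fun k => θ⁻¹ * A p.1 k * x k)
        (Finset.mem_univ p.2)) (le_of_eq_of_le (by simp [matVec]) (h p.1))
    · exact hmin.2 ⟨x, hx, rfl⟩
end
end
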